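/- Let y and ŷ¹,…,ŷᴹ be nonzero vectors in ℝᴺ, and let a₁,…,a_M be nonnegative real weights with ∑_{m=1}^{M} a_m = 1. Define the ℓ₂-normalized ensemble ȳ_(a) = ∑_{m=1}^{M} a_m · ŷᵐ/‖ŷᵐ‖₂, and assume ȳ_(a) ≠ 0. If the weighted average of the base skills is nonnegative, i.e. ∑_{m=1}^{M} a_m · sim(ŷᵐ, y) ≥ 0, then ∑_{m=1}^{M} a_m · sim(ŷᵐ, y) ≤ sim(ȳ_(a), y), where sim(u, v) = ⟨u, v⟩ / (‖u‖₂ ‖v‖₂) denotes cosine similarity. -/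

import Mathlib

/-!
By linearity of the inner product, the weighted skill average equals `⟪ȳ, y⟫ / ‖y‖`, so
`sim ȳ y` is that average divided by `‖ȳ‖`; and `‖ȳ‖ ≤ ∑ aₘ = 1` by the triangle inequality,
since each normalized forecast has norm at most one.
-/

open Finset

noncomputable def sim {N : ℕ} (u v : EuclideanSpace ℝ (Fin N)) : ℝ :=
  (inner ℝ u v : ℝ) / (‖u‖ * ‖v‖)

section Normalize

variable {E : Type*} [SeminormedAddCommGroup E] [NormedSpace ℝ E]

theorem norm_inv_norm_smul_le_one (x : E) : ‖‖x‖⁻¹ • x‖ ≤ 1 := by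
  rw [norm_smul, norm_inv, norm_norm]
  exact inv_mul_le_one_of_le₀ le_rfl (norm_nonneg x)

theorem norm_sum_smul_inv_norm_smul_le {ι : Type*} (s : Finset ι) (a : ι → ℝ) (x : ι → E)
    (ha : ∀ i ∈ s, 0 ≤ a i) : ‖∑ i ∈ s, a i • (‖x i‖⁻¹ • x i)‖ ≤ ∑ i ∈ s, a i :=
  calc ‖∑ i ∈ s, a i • (‖x i‖⁻¹ • x i)‖
      ≤ ∑ i ∈ s, a i * ‖‖x i‖⁻¹ • x i‖ := by
        refine (norm_sum_le _ _).trans (sum_le_sum fun i hi => ?_)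
        rw [norm_smul, Real.norm_of_nonneg (ha i hi)]
    _ ≤ ∑ i ∈ s, a i :=
        sum_le_sum fun i hi => mul_le_of_le_one_right (ha i hi) (norm_inv_norm_smul_le_one _)

end Normalize

section Sim

variable {N : ℕ}

theorem sim_eq_div_norm_div (u v : EuclideanSpace ℝ (Fin N)) :
    sim u v = inner ℝ u v / ‖v‖ / ‖u‖ := by
  rw [sim, div_div, mul_comm]

theorem sim_eq_inner_inv_norm_smul_div (u v : EuclideanSpace ℝ (Fin N)) :
    sim u v = inner ℝ (‖u‖⁻¹ • u) v / ‖v‖ := by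
  rw [sim_eq_div_norm_div, real_inner_smul_left, div_right_comm, inv_mul_eq_div]

theorem sum_mul_sim_eq_inner_div {ι : Type*} (s : Finset ι) (a : ι → ℝ)
    (u : ι → EuclideanSpace ℝ (Fin N)) (v : EuclideanSpace ℝ (Fin N)) :
    ∑ i ∈ s, a i * sim (u i) v = inner ℝ (∑ i ∈ s, a i • (‖u i‖⁻¹ • u i)) v / ‖v‖ := by
  simp only [sum_inner, real_inner_smul_left, sum_div, mul_div_assoc,
    sim_eq_inner_inv_norm_smul_div]

end Sim

theorem l2_ensemble_skill_ge_weighted_avg_general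
    {N M : ℕ} (y : EuclideanSpace ℝ (Fin N)) (yhat : Fin M → EuclideanSpace ℝ (Fin N))
    (a : Fin M → ℝ)
    (ha : ∀ m, 0 ≤ a m) (hsum : ∑ m, a m = 1)
    (hens : ∑ m, a m • (‖yhat m‖⁻¹ • yhat m) ≠ 0)
    (hpos : 0 ≤ ∑ m, a m * sim (yhat m) y) :
    ∑ m, a m * sim (yhat m) y ≤ sim (∑ m, a m • (‖yhat m‖⁻¹ • yhat m)) y := by
  set ens := ∑ m, a m • (‖yhat m‖⁻¹ • yhat m)
  have hens_le : ‖ens‖ ≤ 1 :=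
    hsum ▸ norm_sum_smul_inv_norm_smul_le univ a yhat fun m _ => ha m
  rw [sim_eq_div_norm_div, ← sum_mul_sim_eq_inner_div]
  exact le_div_self hpos (norm_pos_iff.mpr hens) hens_le

theorem l2_ensemble_skill_ge_weighted_avg
    {N M : ℕ} (y : EuclideanSpace ℝ (Fin N)) (yhat : Fin M → EuclideanSpace ℝ (Fin N))
    (a : Fin M → ℝ)
    (hy : y ≠ 0) (hyhat : ∀ m, yhat m ≠ 0)
    (ha : ∀ m, 0 ≤ a m) (hsum : ∑ m, a m = 1)
    (hens : ∑ m, a m • (‖yhat m‖⁻¹ • yhat m) ≠ 0)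
    (hpos : 0 ≤ ∑ m, a m * sim (yhat m) y) :
    ∑ m, a m * sim (yhat m) y ≤ sim (∑ m, a m • (‖yhat m‖⁻¹ • yhat m)) y :=
  l2_ensemble_skill_ge_weighted_avg_general y yhat a ha hsum hens hpos
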